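/- Each of the six graphs K6 minus an edge, the complement of C7, C5 joined with the complement of K2, K_{3,1,3}-hat, Q3, and V8 is internally 4-connected: it is 3-connected, has at least five vertices, and every separator of size 3 is an independent set S such that some vertex v outside S has neighbourhood exactly S. -/

import Mathlib

namespace TwwPaper

open Finset

/-! ### Twin-width via contraction (partition-merge) sequences -/

/-- Two parts `P`, `Q` are *pure* (homogeneous) in `G`: the graph is either complete or empty
between them.  In the trigraph of a partition, a non-pure pair of parts is joined by a red edge. -/
def Pure {V : Type*} (G : SimpleGraph V) (P Q : Finset V) : Prop :=
  (∀ x ∈ P, ∀ y ∈ Q, G.Adj x y) ∨ (∀ x ∈ P, ∀ y ∈ Q, ¬ G.Adj x y)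

/-- The red degree of a part `P` in the partition `PP`: the number of other parts that are
not pure with respect to `P`. -/
noncomputable def redDeg {V : Type*} (G : SimpleGraph V) (PP : Finset (Finset V)) (P : Finset V) : ℕ :=
  {Q | Q ∈ PP ∧ Q ≠ P ∧ ¬ Pure G P Q}.ncard

/-- `QQ` is obtained from `PP` by merging (contracting) two parts. -/
def Merge {V : Type*} [DecidableEq V] (PP QQ : Finset (Finset V)) : Prop :=
  ∃ A ∈ PP, ∃ B ∈ PP, A ≠ B ∧ QQ = insert (A ∪ B) ((PP.erase A).erase B)

/-- One contraction step keeping every red degree at most `d`. -/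
def Step {V : Type*} [DecidableEq V] (G : SimpleGraph V) (d : ℕ) (PP QQ : Finset (Finset V)) :
    Prop :=
  Merge PP QQ ∧ ∀ P ∈ QQ, redDeg G QQ P ≤ d

/-- `G` admits a `d`-contraction sequence: starting from the partition into singletons one can
merge two parts at a time, always keeping all red degrees at most `d`, until one part remains. -/
def TwwLE {V : Type*} [Fintype V] [DecidableEq V] (G : SimpleGraph V) (d : ℕ) : Prop :=
  Relation.ReflTransGen (Step G d)
    (Finset.univ.image fun v => ({v} : Finset V)) {Finset.univ}

/-- The twin-width of a finite simple graph. -/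
noncomputable def tww {V : Type*} [Fintype V] [DecidableEq V] (G : SimpleGraph V) : ℕ :=
  sInf {d | TwwLE G d}

/-! ### Minors, separators, subgraph containment -/

/-- `H` is a minor of `G`: there is a minor model, i.e. pairwise disjoint nonempty connected
branch sets, one for each vertex of `H`, with an edge of `G` between the branch sets of any two
adjacent vertices of `H`. -/
def IsMinor {α β : Type*} (H : SimpleGraph α) (G : SimpleGraph β) : Prop :=
  ∃ f : α → Set β,
    (∀ a, (f a).Nonempty) ∧
    (∀ a, (G.induce (f a)).Connected) ∧
    (∀ a b, a ≠ b → Disjoint (f a) (f b)) ∧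
    ∀ a b, H.Adj a b → ∃ x ∈ f a, ∃ y ∈ f b, G.Adj x y

/-- `S` is a separator of `G` : deleting `S` leaves a nonempty disconnected graph. -/
def Sep {α : Type*} (G : SimpleGraph α) (S : Set α) : Prop :=
  (Sᶜ : Set α).Nonempty ∧ ¬ (G.induce Sᶜ).Preconnected

/-- `G` contains `F` as a (not necessarily induced) subgraph. -/
def ContainsSubgraph {α β : Type*} (G : SimpleGraph β) (F : SimpleGraph α) : Prop :=
  ∃ f : α → β, Function.Injective f ∧ ∀ a b, F.Adj a b → G.Adj (f a) (f b)

/-- `G` is internally 4-connected. -/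
def Internally4Connected {α : Type*} [Fintype α] (G : SimpleGraph α) : Prop :=
  5 ≤ Fintype.card α ∧
  (∀ S : Set α, S.ncard < 3 → ¬ Sep G S) ∧
  ∀ S : Set α, S.ncard = 3 → Sep G S →
    (∀ a ∈ S, ∀ b ∈ S, ¬ G.Adj a b) ∧ ∃ v ∉ S, G.neighborSet v = S

/-! ### The concrete graphs -/

/-- `K₆` minus one edge. -/
def K6minus : SimpleGraph (Fin 6) where
  Adj a b := a ≠ b ∧ ¬(({a, b} : Finset (Fin 6)) = {0, 1})
  symm := by
    refine ⟨?_⟩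
    rintro a b ⟨h1, h2⟩
    exact ⟨h1.symm, by rwa [Finset.pair_comm]⟩
  loopless := ⟨fun a h => h.1 rfl⟩

/-- The complement of the 7-cycle. -/
def C7c : SimpleGraph (Fin 7) := (SimpleGraph.cycleGraph 7)ᶜ

/-- Join of two graphs. -/
def joinG {α β : Type*} (G : SimpleGraph α) (H : SimpleGraph β) : SimpleGraph (α ⊕ β) where
  Adj x y :=
    match x, y with
    | Sum.inl a, Sum.inl b => G.Adj a b
    | Sum.inr a, Sum.inr b => H.Adj a b
    | _, _ => True
  symm := by
    refine ⟨?_⟩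
    rintro (a | a) (b | b) h
    · exact G.symm.symm _ _ h
    · exact trivial
    · exact trivial
    · exact H.symm.symm _ _ h
  loopless := by
    refine ⟨?_⟩
    rintro (a | a) h
    · exact G.loopless.irrefl a h
    · exact H.loopless.irrefl a h

/-- The join of `C₅` with the complement of `K₂` (two isolated vertices). -/
def C5K2c : SimpleGraph (Fin 5 ⊕ Fin 2) :=
  joinG (SimpleGraph.cycleGraph 5) (⊥ : SimpleGraph (Fin 2))

/-- The part of a vertex of `K_{3,1,3}`: `{0,1,2}`, `{3}`, `{4,5,6}`. -/
def triPart : Fin 7 → ℕ := fun a => if a.val < 3 then 0 else if a.val = 3 then 1 else 2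

/-- `K_{3,1̂,3}`: the complete tripartite graph `K_{3,1,3}` minus one edge from the middle
vertex `3` to each of the two size-3 parts (the edges `{0,3}` and `{3,4}`). -/
def K313hat : SimpleGraph (Fin 7) where
  Adj a b := triPart a ≠ triPart b ∧ ¬(({a, b} : Finset (Fin 7)) = {0, 3}) ∧
    ¬(({a, b} : Finset (Fin 7)) = {3, 4})
  symm := by
    refine ⟨?_⟩
    rintro a b ⟨h1, h2, h3⟩
    refine ⟨h1.symm, ?_, ?_⟩ <;> rwa [Finset.pair_comm]
  loopless := ⟨fun a h => h.1 rfl⟩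

/-- The cube graph `Q₃`. -/
def Q3 : SimpleGraph (Fin 2 × Fin 2 × Fin 2) where
  Adj x y := (x.1 ≠ y.1 ∧ x.2 = y.2) ∨ (x.1 = y.1 ∧ x.2.1 ≠ y.2.1 ∧ x.2.2 = y.2.2) ∨
    (x.1 = y.1 ∧ x.2.1 = y.2.1 ∧ x.2.2 ≠ y.2.2)
  symm := by
    refine ⟨?_⟩
    rintro x y (⟨h1, h2⟩ | ⟨h1, h2, h3⟩ | ⟨h1, h2, h3⟩)
    · exact Or.inl ⟨h1.symm, h2.symm⟩
    · exact Or.inr (Or.inl ⟨h1.symm, h2.symm, h3.symm⟩)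
    · exact Or.inr (Or.inr ⟨h1.symm, h2.symm, h3.symm⟩)
  loopless := by
    refine ⟨?_⟩
    rintro x (⟨h, -⟩ | ⟨-, h, -⟩ | ⟨-, -, h⟩) <;> exact h rfl

/-- The Wagner graph `V₈`: the 8-cycle plus the four main diagonals. -/
def V8 : SimpleGraph (Fin 8) where
  Adj a b := a ≠ b ∧ (b = a + 1 ∨ a = b + 1 ∨ b = a + 4)
  symm := by
    refine ⟨?_⟩
    rintro a b ⟨h, h1 | h1 | h1⟩
    · exact ⟨h.symm, Or.inr (Or.inl h1)⟩
    · exact ⟨h.symm, Or.inl h1⟩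
    · refine ⟨h.symm, Or.inr (Or.inr ?_)⟩
      subst h1
      have h4 : (4 : Fin 8) + 4 = 0 := by decide
      rw [add_assoc, h4, add_zero]
  loopless := by refine ⟨?_⟩; rintro a ⟨h, -⟩; exact h rfl

/-- `K₆` minus a perfect matching (`K₆^≡`), i.e. the octahedron `K_{2,2,2}`. -/
def K6mm3 : SimpleGraph (Fin 6) where
  Adj a b := a.val % 3 ≠ b.val % 3
  symm := ⟨fun _ _ h => h.symm⟩
  loopless := ⟨fun _ h => h rfl⟩

/-- `K₆` minus a matching of size two (`K₆^=`). -/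
def K6mm2 : SimpleGraph (Fin 6) where
  Adj a b := a ≠ b ∧ ¬(({a, b} : Finset (Fin 6)) = {0, 3}) ∧
    ¬(({a, b} : Finset (Fin 6)) = {1, 4})
  symm := by
    refine ⟨?_⟩
    rintro a b ⟨h1, h2, h3⟩
    refine ⟨h1.symm, ?_, ?_⟩ <;> rwa [Finset.pair_comm]
  loopless := ⟨fun a h => h.1 rfl⟩

/-- The join of the complement of `C₆` with a single vertex. -/
def C6cK1 : SimpleGraph (Fin 6 ⊕ Fin 1) :=
  joinG ((SimpleGraph.cycleGraph 6)ᶜ) (⊥ : SimpleGraph (Fin 1))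

/-- A perfect matching graph on `Fin m` (`m` even): `2i` is matched to `2i+1`. -/
def matchingGraph (m : ℕ) : SimpleGraph (Fin m) where
  Adj a b := a ≠ b ∧ a.val / 2 = b.val / 2
  symm := ⟨fun _ _ h => ⟨h.1.symm, h.2.symm⟩⟩
  loopless := ⟨fun _ h => h.1 rfl⟩

/-- The `m × n` grid graph. -/
def gridGraph (m n : ℕ) : SimpleGraph (Fin m × Fin n) where
  Adj p q := (p.1 = q.1 ∧ (p.2.val + 1 = q.2.val ∨ q.2.val + 1 = p.2.val)) ∨
    (p.2 = q.2 ∧ (p.1.val + 1 = q.1.val ∨ q.1.val + 1 = p.1.val))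
  symm := by
    refine ⟨?_⟩
    rintro p q (⟨h1, h2⟩ | ⟨h1, h2⟩)
    · exact Or.inl ⟨h1.symm, h2.symm⟩
    · exact Or.inr ⟨h1.symm, h2.symm⟩
  loopless := by refine ⟨?_⟩; rintro p (⟨-, h | h⟩ | ⟨-, h | h⟩) <;> omega

/-! ### `(Δ,Y)`-operation -/

/-- The `(Δ,Y)`-operation on the triangle `{x,y,z}` of `G`: delete the edges of the triangle
and add a new vertex (`none`) adjacent exactly to `x`, `y`, `z`. -/
def deltaY {α : Type*} (G : SimpleGraph α) (x y z : α) : SimpleGraph (Option α) where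
  Adj a b :=
    match a, b with
    | some a, some b => G.Adj a b ∧ ¬((a = x ∨ a = y ∨ a = z) ∧ (b = x ∨ b = y ∨ b = z))
    | some a, none => a = x ∨ a = y ∨ a = z
    | none, some b => b = x ∨ b = y ∨ b = z
    | none, none => False
  symm := by
    refine ⟨?_⟩
    rintro (_ | a) (_ | b) h
    · exact h.elim
    · exact h
    · exact h
    · exact ⟨h.1.symm, fun hc => h.2 ⟨hc.2, hc.1⟩⟩
  loopless := by
    refine ⟨?_⟩
    rintro (_ | a) h
    · exact h
    · exact G.loopless.irrefl a h.1

/-- `G` has a spanning subgraph isomorphic to a member of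
`𝓕₃ = {K₆⁻, C₇ᶜ, C₅ + K₂ᶜ, K_{3,1̂,3}, Q₃, V₈}`. -/
def HasSpanningF3 {α : Type*} (G : SimpleGraph α) : Prop :=
  ∃ H : SimpleGraph α, H ≤ G ∧
    (Nonempty (H ≃g K6minus) ∨ Nonempty (H ≃g C7c) ∨ Nonempty (H ≃g C5K2c) ∨
      Nonempty (H ≃g K313hat) ∨ Nonempty (H ≃g Q3) ∨ Nonempty (H ≃g V8))

/-- `G` has a minor in `𝓕₃`. -/
def HasF3Minor {α : Type*} (G : SimpleGraph α) : Prop :=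
  IsMinor K6minus G ∨ IsMinor C7c G ∨ IsMinor C5K2c G ∨ IsMinor K313hat G ∨
    IsMinor Q3 G ∨ IsMinor V8 G

/-! ### Subdivisions -/

/-- Vertices of the subdivision of `G` in which the edge `ab` (with `a < b`) receives
`ℓ a b` internal (subdivision) vertices: the original vertices plus, for each oriented edge,
`ℓ a b` new vertices. -/
def SubdivVert {α : Type*} [LT α] (G : SimpleGraph α) (ℓ : α → α → ℕ) : Type _ :=
  α ⊕ Σ e : {p : α × α // p.1 < p.2 ∧ G.Adj p.1 p.2}, Fin (ℓ e.1.1 e.1.2)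

noncomputable instance SubdivVert.instFintype {α : Type*} [LT α] [Fintype α]
    (G : SimpleGraph α) (ℓ : α → α → ℕ) : Fintype (SubdivVert G ℓ) := by
  classical
  unfold SubdivVert
  infer_instance

noncomputable instance SubdivVert.instDecidableEq {α : Type*} [LT α] [DecidableEq α]
    (G : SimpleGraph α) (ℓ : α → α → ℕ) : DecidableEq (SubdivVert G ℓ) := by
  classical
  unfold SubdivVert
  infer_instance

/-- The subdivision of `G` in which each edge `ab` (`a < b`) is replaced by a path with
`ℓ a b` internal vertices (so of length `ℓ a b + 1`); an edge with `ℓ a b = 0` stays an edge. -/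
def Subdiv {α : Type*} [LT α] (G : SimpleGraph α) (ℓ : α → α → ℕ) :
    SimpleGraph (SubdivVert G ℓ) where
  Adj x y :=
    match x, y with
    | Sum.inl a, Sum.inl b =>
        G.Adj a b ∧ ((a < b ∧ ℓ a b = 0) ∨ (b < a ∧ ℓ b a = 0))
    | Sum.inl a, Sum.inr ei =>
        (a = ei.1.1.1 ∧ (ei.2 : ℕ) = 0) ∨ (a = ei.1.1.2 ∧ (ei.2 : ℕ) + 1 = ℓ ei.1.1.1 ei.1.1.2)
    | Sum.inr ei, Sum.inl a =>
        (a = ei.1.1.1 ∧ (ei.2 : ℕ) = 0) ∨ (a = ei.1.1.2 ∧ (ei.2 : ℕ) + 1 = ℓ ei.1.1.1 ei.1.1.2)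
    | Sum.inr ei, Sum.inr ej =>
        ei.1 = ej.1 ∧ ((ei.2 : ℕ) + 1 = (ej.2 : ℕ) ∨ (ej.2 : ℕ) + 1 = (ei.2 : ℕ))
  symm := by
    refine ⟨?_⟩
    rintro (a | ei) (b | ej) h
    · exact ⟨h.1.symm, h.2.symm⟩
    · exact h
    · exact h
    · exact ⟨h.1.symm, h.2.symm⟩
  loopless := by
    refine ⟨?_⟩
    rintro (a | ei) h
    · exact G.loopless.irrefl a h.1
    · rcases h.2 with h' | h' <;> omega

/-- Lexicographic order on the vertex set of a grid, used to orient its edges. -/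
def lexLT {m n : ℕ} : LT (Fin m × Fin n) :=
  ⟨fun p q => p.1 < q.1 ∨ (p.1 = q.1 ∧ p.2 < q.2)⟩

/-!
Internal 4-connectivity of a fixed finite graph is a finite check: there are finitely many vertex
sets of size at most three, and whether deleting one disconnects the graph is decided by a
breadth-first search. Once the search is shown to compute reachability, each of the six graphs is
settled by evaluation in the kernel.
-/

section Reachability

variable {β : Type*} [Fintype β] [DecidableEq β] (G : SimpleGraph β) [DecidableRel G.Adj]

def expand (A : Finset β) : Finset β := A ∪ univ.filter fun v => ∃ u ∈ A, G.Adj u v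

def reachFinset (u : β) : Finset β := (expand G)^[Fintype.card β] {u}

lemma expand_mono : Monotone (expand G) := by
  intro A B hAB v hv
  simp only [expand, mem_union, mem_filter, mem_univ, true_and] at hv ⊢
  exact hv.imp (@hAB v) fun ⟨u, hu, huv⟩ => ⟨u, hAB hu, huv⟩

lemma le_expand : id ≤ expand G := fun _ => subset_union_left

lemma mem_iterate_expand_of_walk {u v : β} (p : G.Walk u v) :
    v ∈ (expand G)^[p.length] {u} := by
  induction p with
  | nil => exact mem_singleton_self _
  | @cons a b c hab q ih =>
    have hb : {b} ⊆ expand G {a} := by simp [expand, hab]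
    rw [SimpleGraph.Walk.length_cons, Function.iterate_succ_apply]
    exact (expand_mono G).iterate _ hb ih

lemma reachable_of_mem_iterate_expand {u v : β} {n : ℕ} (h : v ∈ (expand G)^[n] {u}) :
    G.Reachable u v := by
  induction n generalizing v with
  | zero => rw [Function.iterate_zero_apply, mem_singleton] at h; exact h ▸ .rfl
  | succ n ih =>
    rw [Function.iterate_succ_apply', expand, mem_union, mem_filter] at h
    obtain h | ⟨-, w, hw, hwv⟩ := h
    · exact ih h
    · exact (ih hw).trans hwv.reachable

/-- `card β` rounds suffice since a path has fewer than `card β` edges. -/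
theorem reachable_iff_mem_reachFinset {u v : β} : G.Reachable u v ↔ v ∈ reachFinset G u :=
  ⟨fun ⟨p⟩ => Function.monotone_iterate_of_id_le (le_expand G) p.toPath.2.length_lt.le _
      (mem_iterate_expand_of_walk G p.toPath.1),
    reachable_of_mem_iterate_expand G⟩

end Reachability

section Separators

variable {α : Type*}

/-- `G` with every edge at `s` deleted; unlike `G.induce (↑s)ᶜ` it lives on the vertex type of
`G`, so `reachFinset` can search it. -/
def isolate (G : SimpleGraph α) (s : Finset α) : SimpleGraph α where
  Adj a b := G.Adj a b ∧ a ∉ s ∧ b ∉ s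
  symm := ⟨fun _ _ ⟨h, ha, hb⟩ => ⟨h.symm, hb, ha⟩⟩
  loopless := ⟨fun a h => G.loopless.irrefl a h.1⟩

instance (G : SimpleGraph α) [DecidableRel G.Adj] [DecidableEq α] (s : Finset α) :
    DecidableRel (isolate G s).Adj := fun a b =>
  inferInstanceAs (Decidable (G.Adj a b ∧ a ∉ s ∧ b ∉ s))

lemma reachable_induce_compl_of_walk_isolate {G : SimpleGraph α} {s : Finset α} {u v : α}
    (p : (isolate G s).Walk u v) (hu : u ∉ s) (hv : v ∉ s) :
    (G.induce (↑s)ᶜ).Reachable ⟨u, hu⟩ ⟨v, hv⟩ := by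
  induction p with
  | nil => rfl
  | cons h q ih => exact (SimpleGraph.induce_adj.2 h.1).reachable.trans (ih h.2.2 hv)

lemma preconnected_induce_compl_iff (G : SimpleGraph α) (s : Finset α) :
    (G.induce (↑s)ᶜ).Preconnected ↔ ∀ u ∉ s, ∀ v ∉ s, (isolate G s).Reachable u v := by
  refine ⟨fun h u hu v hv => ?_, fun h ⟨u, hu⟩ ⟨v, hv⟩ => ?_⟩
  · refine (h ⟨u, hu⟩ ⟨v, hv⟩).map ⟨Subtype.val, ?_⟩
    rintro ⟨a, ha⟩ ⟨b, hb⟩ hab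
    exact ⟨hab, ha, hb⟩
  · obtain ⟨p⟩ := h u hu v hv
    exact reachable_induce_compl_of_walk_isolate p hu hv

variable [Fintype α] [DecidableEq α] (G : SimpleGraph α) [DecidableRel G.Adj]

def SepByReach (s : Finset α) : Prop :=
  (∃ x, x ∉ s) ∧ ¬ ∃ u ∉ s, ∀ v ∉ s, v ∈ reachFinset (isolate G s) u

instance (s : Finset α) : Decidable (SepByReach G s) := by
  unfold SepByReach; infer_instance

lemma sep_coe_iff (s : Finset α) : Sep G ↑s ↔ SepByReach G s := by
  simp only [Sep, SepByReach, preconnected_induce_compl_iff, ← reachable_iff_mem_reachFinset]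
  rw [show ((↑s : Set α)ᶜ).Nonempty ↔ ∃ x, x ∉ s by simp [Set.Nonempty]]
  refine and_congr_right fun ⟨x, hx⟩ => not_congr ⟨fun h => ⟨x, hx, h x hx⟩, ?_⟩
  exact fun ⟨u, hu, hr⟩ v hv w hw => (hr v hv).symm.trans (hr w hw)

theorem internally4Connected_of_sepByReach (hcard : 5 ≤ Fintype.card α)
    (h2 : ∀ s : Finset α, s.card < 3 → ¬ SepByReach G s)
    (h3 : ∀ s : Finset α, s.card = 3 → SepByReach G s →
      (∀ a ∈ s, ∀ b ∈ s, ¬ G.Adj a b) ∧ ∃ v ∉ s, ∀ x, G.Adj v x ↔ x ∈ s) :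
    Internally4Connected G := by
  refine ⟨hcard, fun S hS hsep => ?_, fun S hS hsep => ?_⟩ <;>
    obtain ⟨s, rfl⟩ := S.toFinite.exists_finset_coe <;>
    rw [Set.ncard_coe_finset] at hS <;> rw [sep_coe_iff] at hsep
  · exact h2 s hS hsep
  · obtain ⟨hind, v, hv, hN⟩ := h3 s hS hsep
    exact ⟨hind, v, hv, Set.ext hN⟩

end Separators

instance : DecidableRel K6minus.Adj := fun a b =>
  inferInstanceAs (Decidable (a ≠ b ∧ ¬(({a, b} : Finset (Fin 6)) = {0, 1})))

instance : DecidableRel C7c.Adj := fun a b =>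
  inferInstanceAs (Decidable ((SimpleGraph.cycleGraph 7)ᶜ.Adj a b))

instance {α β : Type*} (G : SimpleGraph α) (H : SimpleGraph β) [DecidableRel G.Adj]
    [DecidableRel H.Adj] : DecidableRel (joinG G H).Adj
  | Sum.inl a, Sum.inl b => inferInstanceAs (Decidable (G.Adj a b))
  | Sum.inl _, Sum.inr _ => inferInstanceAs (Decidable True)
  | Sum.inr _, Sum.inl _ => inferInstanceAs (Decidable True)
  | Sum.inr a, Sum.inr b => inferInstanceAs (Decidable (H.Adj a b))

instance : DecidableRel C5K2c.Adj :=
  inferInstanceAs (DecidableRel (joinG (SimpleGraph.cycleGraph 5) (⊥ : SimpleGraph (Fin 2))).Adj)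

instance : DecidableRel K313hat.Adj := fun a b =>
  inferInstanceAs (Decidable (triPart a ≠ triPart b ∧ ¬(({a, b} : Finset (Fin 7)) = {0, 3}) ∧
    ¬(({a, b} : Finset (Fin 7)) = {3, 4})))

instance : DecidableRel Q3.Adj := fun x y =>
  inferInstanceAs (Decidable ((x.1 ≠ y.1 ∧ x.2 = y.2) ∨
    (x.1 = y.1 ∧ x.2.1 ≠ y.2.1 ∧ x.2.2 = y.2.2) ∨ (x.1 = y.1 ∧ x.2.1 = y.2.1 ∧ x.2.2 ≠ y.2.2)))

instance : DecidableRel V8.Adj := fun a b =>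
  inferInstanceAs (Decidable (a ≠ b ∧ (b = a + 1 ∨ a = b + 1 ∨ b = a + 4)))

section

set_option synthInstance.maxSize 1000

lemma internally4Connected_K6minus : Internally4Connected K6minus :=
  internally4Connected_of_sepByReach _ (by decide +kernel) (by decide +kernel) (by decide +kernel)

lemma internally4Connected_C7c : Internally4Connected C7c :=
  internally4Connected_of_sepByReach _ (by decide +kernel) (by decide +kernel) (by decide +kernel)

lemma internally4Connected_C5K2c : Internally4Connected C5K2c :=
  internally4Connected_of_sepByReach _ (by decide +kernel) (by decide +kernel) (by decide +kernel)

lemma internally4Connected_K313hat : Internally4Connected K313hat :=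
  internally4Connected_of_sepByReach _ (by decide +kernel) (by decide +kernel) (by decide +kernel)

lemma internally4Connected_Q3 : Internally4Connected Q3 :=
  internally4Connected_of_sepByReach _ (by decide +kernel) (by decide +kernel) (by decide +kernel)

lemma internally4Connected_V8 : Internally4Connected V8 :=
  internally4Connected_of_sepByReach _ (by decide +kernel) (by decide +kernel) (by decide +kernel)

end

/-- Every graph in `𝓕₃` is internally 4-connected. -/
theorem f3_internally4Connected :
    Internally4Connected K6minus ∧ Internally4Connected C7c ∧ Internally4Connected C5K2c ∧
      Internally4Connected K313hat ∧ Internally4Connected Q3 ∧ Internally4Connected V8 :=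
  ⟨internally4Connected_K6minus, internally4Connected_C7c, internally4Connected_C5K2c,
    internally4Connected_K313hat, internally4Connected_Q3, internally4Connected_V8⟩

end TwwPaper
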